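/- For all smooth functions u, v : ℝ → ℝ, the following pointwise identities hold on ℝ: (d/dx)³(4u − v) − 2u·(d/dx)(4u − v) − u_x·(4u − v) = 4u_xxx − v_xxx − 12u u_x + v u_x + 2u v_x, and −9(d/dx)³(−u + (2/9)v) + 12v·(d/dx)(−u + (2/9)v) + 6v_x·(−u + (2/9)v) = 9u_xxx − 2v_xxx − 12v u_x − 6u v_x + 4v v_x. In other words, the right-hand side of the KKS system equals 𝔓₀ applied to the variational derivative of H₁, so the KKS system is Hamiltonian with respect to 𝔓₀ with Hamiltonian density H₁. -/

import Mathlib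

lemma itd_comb (a b : ℝ) (u v : ℝ → ℝ) (hu : ContDiff ℝ (⊤ : ℕ∞) u) (hv : ContDiff ℝ (⊤ : ℕ∞) v)
    (n : ℕ) (x : ℝ) :
    iteratedDeriv n (fun y => a * u y + b * v y) x
      = a * iteratedDeriv n u x + b * iteratedDeriv n v x := by
  have hu' : ContDiffOn ℝ n u Set.univ := (hu.of_le (by exact_mod_cast le_top)).contDiffOn
  have hv' : ContDiffOn ℝ n v Set.univ := (hv.of_le (by exact_mod_cast le_top)).contDiffOn
  simp_rw [← iteratedDerivWithin_univ]
  rw [show (fun y => a * u y + b * v y) = ((fun y => a * u y) + fun y => b * v y) from rfl,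
    iteratedDerivWithin_add (Set.mem_univ x) uniqueDiffOn_univ
      ((contDiffOn_const.mul hu') x (Set.mem_univ x)) ((contDiffOn_const.mul hv') x (Set.mem_univ x)),
    iteratedDerivWithin_const_mul (Set.mem_univ x) uniqueDiffOn_univ a (hu' x (Set.mem_univ x)),
    iteratedDerivWithin_const_mul (Set.mem_univ x) uniqueDiffOn_univ b (hv' x (Set.mem_univ x))]

/-- The KKS system is Hamiltonian with respect to the operator 𝔓₀
with Hamiltonian density `H₁ = 2u² − uv + v²/9`: applying 𝔓₀ to the variational
derivative `(4u − v, −u + (2/9)v)` of `H₁` yields the right-hand side of the KKS system. -/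
theorem kks_hamiltonian_P0_H1 (u v : ℝ → ℝ)
    (hu : ContDiff ℝ (⊤ : ℕ∞) u) (hv : ContDiff ℝ (⊤ : ℕ∞) v) :
    (∀ x : ℝ,
      iteratedDeriv 3 (fun y => 4 * u y - v y) x
        - 2 * u x * deriv (fun y => 4 * u y - v y) x
        - deriv u x * (4 * u x - v x)
      = 4 * iteratedDeriv 3 u x - iteratedDeriv 3 v x
        - 12 * u x * deriv u x + v x * deriv u x + 2 * u x * deriv v x) ∧
    (∀ x : ℝ,
      -9 * iteratedDeriv 3 (fun y => -u y + (2 / 9) * v y) x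
        + 12 * v x * deriv (fun y => -u y + (2 / 9) * v y) x
        + 6 * deriv v x * (-u x + (2 / 9) * v x)
      = 9 * iteratedDeriv 3 u x - 2 * iteratedDeriv 3 v x
        - 12 * v x * deriv u x - 6 * u x * deriv v x + 4 * v x * deriv v x) := by
  constructor <;> intro x
  · have h3 : iteratedDeriv 3 (fun y => 4 * u y - v y) x
        = 4 * iteratedDeriv 3 u x + (-1) * iteratedDeriv 3 v x := by
      have := itd_comb 4 (-1) u v hu hv 3 x
      simpa [sub_eq_add_neg, neg_mul] using this
    have h1 : deriv (fun y => 4 * u y - v y) x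
        = 4 * deriv u x + (-1) * deriv v x := by
      have := itd_comb 4 (-1) u v hu hv 1 x
      simpa [sub_eq_add_neg, neg_mul, iteratedDeriv_one] using this
    rw [h3, h1]; ring
  · have h3 : iteratedDeriv 3 (fun y => -u y + (2/9) * v y) x
        = (-1) * iteratedDeriv 3 u x + (2/9) * iteratedDeriv 3 v x := by
      have := itd_comb (-1) (2/9) u v hu hv 3 x
      simpa [neg_mul] using this
    have h1 : deriv (fun y => -u y + (2/9) * v y) x
        = (-1) * deriv u x + (2/9) * deriv v x := by
      have := itd_comb (-1) (2/9) u v hu hv 1 x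
      simpa [neg_mul, iteratedDeriv_one] using this
    rw [h3, h1]; ring
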